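/- arXiv:math/0005165 — 2 statements merged into one kernel-verified Lean document; each statement's English description precedes it below -/
import Mathlib

section
/- Let (E, ω) be a finite-dimensional symplectic k-vector space, i.e., ω is a nondegenerate skew-symmetric k-bilinear form on E. Then the pairing {·,·}_ω : TE × TE → TE maps [TE,TE] × TE and TE × [TE,TE] into [TE,TE], and the induced bracket makes the quotient TE/[TE,TE] into a Lie algebra over k (bilinear, alternating, Jacobi identity). (Theorem 2.2 of the paper specialized to the free algebra A = TE over B = k equipped with its canonical symplectic 2-form.) -/
/- STATEMENT 1: For a finite-dimensional symplectic k-vector space (E, ω) (k a field of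
characteristic zero), the pairing {·,·}_ω on the tensor algebra TE maps [TE,TE] × TE and
TE × [TE,TE] into [TE,TE], and the induced bracket makes TE/[TE,TE] a Lie algebra
(bilinear, alternating, Jacobi identity). -/

noncomputable section

open scoped BigOperators

/-- The product `u_1 ⊗ ⋯ ⊗ u_p` in the tensor algebra associated to a list of vectors. -/
def wordProd (k : Type*) [Field k] {E : Type*} [AddCommGroup E] [Module k E]
    (w : List E) : TensorAlgebra k E :=
  (w.map fun e => TensorAlgebra.ι k e).prod

/-- The list obtained from `w` by deleting the entry at position `i` and cyclically rotating
so that the entries after position `i` come first. -/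
def rotAt {E : Type*} (w : List E) (i : ℕ) : List E :=
  w.drop (i + 1) ++ w.take i

/-- `[TE,TE]`: the k-linear span of all commutators in the tensor algebra. -/
def commSpan (k E : Type*) [Field k] [AddCommGroup E] [Module k E] :
    Submodule k (TensorAlgebra k E) :=
  Submodule.span k {z | ∃ a b : TensorAlgebra k E, z = a * b - b * a}

/-- The value of the pairing `{·,·}_ω` on a pair of homogeneous tensors
`u_1 ⊗ ⋯ ⊗ u_p`, `v_1 ⊗ ⋯ ⊗ v_q`:
`Σ_{i,j} ω(u_i, v_j) • u_{i+1}⊗⋯⊗u_p⊗u_1⊗⋯⊗u_{i−1} ⊗ v_{j+1}⊗⋯⊗v_q⊗v_1⊗⋯⊗v_{j−1}`. -/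
def wordBracket {k : Type*} [Field k] {E : Type*} [AddCommGroup E] [Module k E]
    (ω : E →ₗ[k] E →ₗ[k] k) (u v : List E) : TensorAlgebra k E :=
  ∑ i : Fin u.length, ∑ j : Fin v.length,
    ω (u.get i) (v.get j) • wordProd k (rotAt u i ++ rotAt v j)

/-!
On words, the pairing depends on its first argument only through the cyclic word: the terms of
`{a ++ b, w}` and `{b ++ a, w}` coincide, so `{·,·}_ω` kills commutators in the first slot.
Exchanging the arguments of a single term `ω(u_i, v_j) • (rotAt u i ++ rotAt v j)` flips the sign
of the coefficient and rotates the word, so `{f, g} + {g, f}` is a sum of commutators; this gives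
the second slot, and, as `2 ≠ 0`, the alternating property.

For the Jacobi identity, `{u, {v, w}} = N(u, v, w) - N(u, w, v)`, where `N(u, v, w)` collects the
terms in which `u` meets a letter of `v` surviving the contraction of `v_j` with `w_l`. The term
of `N(u, v, w)` in which `u_i` meets `v_j'` matches the term of `N(w, v, u)` in which `u_i` meets
`v_j'` first and `w_l` then meets `v_j`: by skew-symmetry the coefficients agree and the words
are cyclic rotations of each other. Hence `N(u, v, w) ≡ N(w, v, u)` modulo commutators, and the
six terms of the Jacobiator cancel in pairs.
-/

open Finset

section Rotation

variable {α : Type*}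

lemma rotAt_length {v : List α} {i : ℕ} (hi : i < v.length) :
    (rotAt v i).length = v.length - 1 := by
  simp only [rotAt, List.length_append, List.length_drop, List.length_take]
  omega

lemma rotAt_append_left (a b : List α) {i : ℕ} (hi : i < a.length) :
    rotAt (a ++ b) i = a.drop (i + 1) ++ b ++ a.take i := by
  simp [rotAt, List.drop_append, List.take_append, Nat.sub_eq_zero_of_le hi,
    Nat.sub_eq_zero_of_le hi.le]

lemma rotAt_append_right (a b : List α) (i : ℕ) :
    rotAt (a ++ b) (a.length + i) = b.drop (i + 1) ++ a ++ b.take i := by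
  simp [rotAt, List.drop_append, List.take_append,
    List.drop_eq_nil_of_le (by omega : a.length ≤ a.length + i + 1),
    show a.length + i + 1 - a.length = i + 1 by omega]

lemma sum_range_rotAt_append {M : Type*} [AddCommMonoid M] (F : α → List α → M) (d : α)
    (a b : List α) :
    ∑ i ∈ range (a ++ b).length, F ((a ++ b).getD i d) (rotAt (a ++ b) i) =
      ∑ i ∈ range a.length, F (a.getD i d) (a.drop (i + 1) ++ b ++ a.take i) +
        ∑ i ∈ range b.length, F (b.getD i d) (b.drop (i + 1) ++ a ++ b.take i) := by
  rw [List.length_append, sum_range_add]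
  congr 1
  · refine sum_congr rfl fun i hi => ?_
    have hi := mem_range.mp hi
    rw [List.getD_append _ _ _ _ hi, rotAt_append_left _ _ hi]
  · refine sum_congr rfl fun i _ => ?_
    rw [List.getD_append_right _ _ _ _ (by omega), Nat.add_sub_cancel_left, rotAt_append_right]

lemma cons_rotAt (d : α) {v : List α} {i : ℕ} (hi : i < v.length) :
    v.getD i d :: rotAt v i = v.rotate i := by
  rw [List.rotate_eq_drop_append_take hi.le, List.drop_eq_getElem_cons hi,
    List.getD_eq_getElem _ _ hi, rotAt, List.cons_append]

/-- Rotating `v_j :: rotAt v j` on to the letter `n + 1` places after `v_j` splits `rotAt v j`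
at that letter and puts `v_j` between the two pieces. -/
lemma cons_rotAt_mod (d : α) {v : List α} {j n : ℕ} (hj : j < v.length)
    (hn : n < v.length - 1) :
    v.getD ((j + 1 + n) % v.length) d :: rotAt v ((j + 1 + n) % v.length) =
      (rotAt v j).getD n d :: ((rotAt v j).drop (n + 1) ++ v.getD j d :: (rotAt v j).take n) := by
  have hn' : n < (rotAt v j).length := by rw [rotAt_length hj]; exact hn
  rw [cons_rotAt d (Nat.mod_lt _ (by omega)), List.rotate_mod, add_assoc, add_comm 1 n,
    ← List.rotate_rotate, ← cons_rotAt d hj, List.rotate_cons_succ,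
    List.rotate_eq_drop_append_take (by simp; omega), List.drop_append_of_le_length hn'.le,
    List.take_append_of_le_length hn'.le, List.drop_eq_getElem_cons hn',
    List.getD_eq_getElem _ _ hn']
  simp only [List.cons_append, List.append_assoc, List.nil_append]

end Rotation

lemma mod_eq_or_add_eq {a q : ℕ} (h : a < 2 * q) : a % q = a ∨ a % q + q = a := by
  rcases lt_or_ge a q with h' | h'
  · exact Or.inl (Nat.mod_eq_of_lt h')
  · right
    rw [Nat.mod_eq_sub_mod h', Nat.mod_eq_of_lt (by omega)]
    omega

/-- The pairs `(j, n)` index a letter `v_j` of a cyclic word of length `q` together with a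
second letter `n + 1` places after it; swapping the roles of the two letters is an involution. -/
lemma sum_range_rotAt_index_swap {M : Type*} [AddCommMonoid M] (q : ℕ) (f : ℕ → ℕ → M) :
    ∑ j ∈ range q, ∑ n ∈ range (q - 1), f ((j + 1 + n) % q) (q - 2 - n) =
      ∑ j ∈ range q, ∑ n ∈ range (q - 1), f j n := by
  let σ : ℕ × ℕ → ℕ × ℕ := fun x => ((x.1 + 1 + x.2) % q, q - 2 - x.2)
  have hσ : ∀ x ∈ range q ×ˢ range (q - 1),
      σ x ∈ range q ×ˢ range (q - 1) ∧ σ (σ x) = x := by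
    rintro ⟨j, n⟩ hx
    simp only [mem_product, mem_range] at hx
    have h₀ := Nat.mod_lt (j + 1 + n) (by omega : 0 < q)
    have h₁ := mod_eq_or_add_eq (a := j + 1 + n) (q := q) (by omega)
    have h₂ := mod_eq_or_add_eq (a := (j + 1 + n) % q + 1 + (q - 2 - n)) (q := q) (by omega)
    have h₃ := Nat.mod_lt ((j + 1 + n) % q + 1 + (q - 2 - n)) (by omega : 0 < q)
    simp only [σ, mem_product, mem_range, Prod.ext_iff]
    omega
  rw [← sum_product', ← sum_product']
  exact sum_nbij' σ σ (fun x hx => (hσ x hx).1) (fun x hx => (hσ x hx).1)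
    (fun x hx => (hσ x hx).2) (fun x hx => (hσ x hx).2) fun _ _ => rfl

section TensorAlgebra

variable {k : Type*} [Field k] {E : Type*} [AddCommGroup E] [Module k E]

lemma wordProd_append (a b : List E) :
    wordProd k (a ++ b) = wordProd k a * wordProd k b := by
  simp [wordProd]

lemma span_range_wordProd : Submodule.span k (Set.range (wordProd k (E := E))) = ⊤ := by
  have closure_le : (Submonoid.closure (Set.range (TensorAlgebra.ι k (M := E))) :
      Set (TensorAlgebra k E)) ⊆ Set.range (wordProd k) := by
    intro x hx
    induction hx using Submonoid.closure_induction with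
    | mem x hx => obtain ⟨e, rfl⟩ := hx; exact ⟨[e], by simp [wordProd]⟩
    | one => exact ⟨[], by simp [wordProd]⟩
    | mul x y _ _ hx hy =>
      obtain ⟨u, rfl⟩ := hx
      obtain ⟨v, rfl⟩ := hy
      exact ⟨u ++ v, wordProd_append u v⟩
  refine top_unique ?_
  calc (⊤ : Submodule k (TensorAlgebra k E))
      = Subalgebra.toSubmodule (Algebra.adjoin k (Set.range (TensorAlgebra.ι k (M := E)))) := by
        rw [TensorAlgebra.adjoin_range_ι, Algebra.top_toSubmodule]
    _ = Submodule.span k (Submonoid.closure (Set.range (TensorAlgebra.ι k (M := E))) :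
          Set (TensorAlgebra k E)) :=
        Algebra.adjoin_eq_span _ _
    _ ≤ Submodule.span k (Set.range (wordProd k)) := Submodule.span_mono closure_le

lemma wordProd_ext {N : Type*} [AddCommGroup N] [Module k N] {L L' : TensorAlgebra k E →ₗ[k] N}
    (h : ∀ u : List E, L (wordProd k u) = L' (wordProd k u)) : L = L' :=
  LinearMap.ext_on_range span_range_wordProd h

lemma mem_of_forall_wordProd {N : Type*} [AddCommGroup N] [Module k N]
    (L : TensorAlgebra k E →ₗ[k] N) (p : Submodule k N)
    (h : ∀ u : List E, L (wordProd k u) ∈ p) (f : TensorAlgebra k E) : L f ∈ p := by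
  have hL : p.mkQ ∘ₗ L = 0 := wordProd_ext fun u => by simpa using h u
  simpa using LinearMap.congr_fun hL f

lemma commutator_mem_commSpan (a b : TensorAlgebra k E) : a * b - b * a ∈ commSpan k E :=
  Submodule.subset_span ⟨a, b, rfl⟩

lemma wordProd_append_sub_mem_commSpan (a b : List E) :
    wordProd k (a ++ b) - wordProd k (b ++ a) ∈ commSpan k E := by
  rw [wordProd_append, wordProd_append]
  exact commutator_mem_commSpan _ _

lemma commSpan_le_ker {N : Type*} [AddCommGroup N] [Module k N] (L : TensorAlgebra k E →ₗ[k] N)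
    (h : ∀ u v : List E, L (wordProd k (u ++ v)) = L (wordProd k (v ++ u))) :
    commSpan k E ≤ LinearMap.ker L := by
  have word_mul : ∀ u b, L (wordProd k u * b) = L (b * wordProd k u) := fun u b =>
    LinearMap.congr_fun (wordProd_ext (L := L ∘ₗ LinearMap.mulLeft k (wordProd k u))
      (L' := L ∘ₗ LinearMap.mulRight k (wordProd k u)) fun v => by
        simpa [wordProd_append] using h u v) b
  rw [commSpan, Submodule.span_le]
  rintro _ ⟨a, b, rfl⟩
  rw [SetLike.mem_coe, LinearMap.mem_ker, map_sub, sub_eq_zero]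
  exact LinearMap.congr_fun (wordProd_ext (L := L ∘ₗ LinearMap.mulRight k b)
    (L' := L ∘ₗ LinearMap.mulLeft k b) fun u => by simpa using word_mul u b) a

def jacobiator {A : Type*} [AddCommGroup A] [Module k A] (Br : A →ₗ[k] A →ₗ[k] A)
    (f g h : A) : A :=
  Br f (Br g h) + Br g (Br h f) + Br h (Br f g)

lemma jacobiator_rotate {A : Type*} [AddCommGroup A] [Module k A] (Br : A →ₗ[k] A →ₗ[k] A)
    (f g h : A) : jacobiator Br f g h = jacobiator Br g h f := by
  simp only [jacobiator]
  abel

lemma add_swap_mem_of_forall_wordProd {N : Type*} [AddCommGroup N] [Module k N]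
    (Br : TensorAlgebra k E →ₗ[k] TensorAlgebra k E →ₗ[k] N) (p : Submodule k N)
    (h : ∀ u v : List E,
      Br (wordProd k u) (wordProd k v) + Br (wordProd k v) (wordProd k u) ∈ p)
    (f g : TensorAlgebra k E) : Br f g + Br g f ∈ p := by
  have word_left : ∀ u g, Br (wordProd k u) g + Br g (wordProd k u) ∈ p := fun u g => by
    simpa using mem_of_forall_wordProd (Br (wordProd k u) + Br.flip (wordProd k u)) p (h u) g
  simpa [add_comm] using
    mem_of_forall_wordProd (Br.flip g + Br g) p (fun u => word_left u g) f

lemma jacobiator_mem_of_forall_wordProd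
    (Br : TensorAlgebra k E →ₗ[k] TensorAlgebra k E →ₗ[k] TensorAlgebra k E)
    (p : Submodule k (TensorAlgebra k E))
    (hwords : ∀ u v w : List E,
      jacobiator Br (wordProd k u) (wordProd k v) (wordProd k w) ∈ p)
    (f g h : TensorAlgebra k E) : jacobiator Br f g h ∈ p := by
  have extend_last : ∀ f g, (∀ w, jacobiator Br f g (wordProd k w) ∈ p) →
      ∀ h, jacobiator Br f g h ∈ p := fun f g hw h => by
    simpa [jacobiator, add_assoc] using
      mem_of_forall_wordProd (Br f ∘ₗ Br g + (Br g ∘ₗ Br.flip f + Br.flip (Br f g))) p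
        (fun w => by simpa [jacobiator, add_assoc] using hw w) h
  have two_words : ∀ u v h, jacobiator Br (wordProd k u) (wordProd k v) h ∈ p :=
    fun u v => extend_last _ _ (hwords u v)
  have one_word : ∀ u g h, jacobiator Br (wordProd k u) g h ∈ p := fun u g h => by
    rw [jacobiator_rotate, jacobiator_rotate]
    exact extend_last _ _ (fun v => by rw [jacobiator_rotate]; exact two_words u v h) g
  rw [jacobiator_rotate]
  exact extend_last _ _ (fun u => by rw [← jacobiator_rotate]; exact one_word u g h) f

section WordBracket

variable (ω : E →ₗ[k] E →ₗ[k] k)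

lemma wordBracket_eq_sum_range (u v : List E) :
    wordBracket ω u v = ∑ i ∈ range u.length, ∑ j ∈ range v.length,
      ω (u.getD i 0) (v.getD j 0) • wordProd k (rotAt u i ++ rotAt v j) := by
  simp [wordBracket, sum_range]

lemma wordBracket_append_comm (a b w : List E) :
    wordBracket ω (a ++ b) w = wordBracket ω (b ++ a) w := by
  let F : E → List E → TensorAlgebra k E := fun x r =>
    ∑ j ∈ range w.length, ω x (w.getD j 0) • wordProd k (r ++ rotAt w j)
  rw [wordBracket_eq_sum_range, wordBracket_eq_sum_range, sum_range_rotAt_append F,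
    sum_range_rotAt_append F, add_comm]

lemma wordBracket_add_swap_mem (hskew : ∀ x y : E, ω x y = - ω y x) (u v : List E) :
    wordBracket ω u v + wordBracket ω v u ∈ commSpan k E := by
  rw [wordBracket_eq_sum_range, wordBracket_eq_sum_range ω v, sum_comm (s := range v.length),
    ← sum_add_distrib]
  refine sum_mem fun i _ => ?_
  rw [← sum_add_distrib]
  refine sum_mem fun j _ => ?_
  rw [hskew (v.getD j 0), neg_smul, ← sub_eq_add_neg, ← smul_sub]
  exact Submodule.smul_mem _ _ (wordProd_append_sub_mem_commSpan _ _)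

/-- The terms of `wordBracket ω u (a ++ b)` in which `u` is contracted with a letter of `a`. -/
def wordBracketPart (u a b : List E) : TensorAlgebra k E :=
  ∑ i ∈ range u.length, ∑ n ∈ range a.length,
    ω (u.getD i 0) (a.getD n 0) • wordProd k (rotAt u i ++ (a.drop (n + 1) ++ b ++ a.take n))

lemma wordBracket_append_right (u a b : List E) :
    wordBracket ω u (a ++ b) = wordBracketPart ω u a b + wordBracketPart ω u b a := by
  rw [wordBracket_eq_sum_range, wordBracketPart, wordBracketPart, ← sum_add_distrib]
  exact sum_congr rfl fun i _ =>
    sum_range_rotAt_append (fun y r => ω (u.getD i 0) y • wordProd k (rotAt u i ++ r)) 0 a b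

/-- The terms of `{u, {v, w}}` in which `u` is contracted with a letter of `v`. -/
def nestedBracketPart (u v w : List E) : TensorAlgebra k E :=
  ∑ j ∈ range v.length, ∑ l ∈ range w.length,
    ω (v.getD j 0) (w.getD l 0) • wordBracketPart ω u (rotAt v j) (rotAt w l)

lemma bracket_bracket_wordProd (hskew : ∀ x y : E, ω x y = - ω y x)
    (Br : TensorAlgebra k E →ₗ[k] TensorAlgebra k E →ₗ[k] TensorAlgebra k E)
    (hBr : ∀ u v : List E, Br (wordProd k u) (wordProd k v) = wordBracket ω u v)
    (u v w : List E) :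
    Br (wordProd k u) (Br (wordProd k v) (wordProd k w)) =
      nestedBracketPart ω u v w - nestedBracketPart ω u w v := by
  rw [hBr, wordBracket_eq_sum_range]
  simp only [map_sum, map_smul, hBr, wordBracket_append_right, smul_add, sum_add_distrib,
    nestedBracketPart]
  rw [sub_eq_add_neg, sum_comm (s := range w.length), ← sum_neg_distrib]
  congr 1
  refine sum_congr rfl fun j _ => ?_
  rw [← sum_neg_distrib]
  refine sum_congr rfl fun l _ => ?_
  rw [hskew (v.getD j 0), neg_smul]

lemma nestedBracketPart_eq_sum (u v w : List E) :
    nestedBracketPart ω u v w = ∑ j ∈ range v.length, ∑ n ∈ range (v.length - 1),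
      ∑ i ∈ range u.length, ∑ l ∈ range w.length,
        (ω (v.getD j 0) (w.getD l 0) * ω (u.getD i 0) ((rotAt v j).getD n 0)) •
          wordProd k (rotAt u i ++
            ((rotAt v j).drop (n + 1) ++ rotAt w l ++ (rotAt v j).take n)) := by
  refine sum_congr rfl fun j hj => ?_
  rw [← rotAt_length (mem_range.mp hj)]
  simp only [wordBracketPart, smul_sum, smul_smul]
  rw [sum_comm]
  refine (sum_congr rfl fun i _ => sum_comm).trans sum_comm

lemma nestedBracketPart_term_sub_mem (hskew : ∀ x y : E, ω x y = - ω y x) (x y : E)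
    (X W v : List E) {j n : ℕ} (hj : j < v.length) (hn : n < v.length - 1) :
    (ω (v.getD j 0) y * ω x ((rotAt v j).getD n 0)) •
        wordProd k (X ++ ((rotAt v j).drop (n + 1) ++ W ++ (rotAt v j).take n)) -
      (ω (v.getD ((j + 1 + n) % v.length) 0) x *
          ω y ((rotAt v ((j + 1 + n) % v.length)).getD (v.length - 2 - n) 0)) •
        wordProd k (W ++ ((rotAt v ((j + 1 + n) % v.length)).drop (v.length - 2 - n + 1) ++ X ++
          (rotAt v ((j + 1 + n) % v.length)).take (v.length - 2 - n))) ∈ commSpan k E := by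
  obtain ⟨hletter, hrot⟩ := List.cons.inj (cons_rotAt_mod 0 hj hn)
  have hlen : ((rotAt v j).drop (n + 1)).length = v.length - 2 - n := by
    rw [List.length_drop, rotAt_length hj]
    omega
  rw [hrot, ← hletter, ← hlen]
  simp only [List.getD_append_right _ _ _ _ le_rfl, Nat.sub_self, List.getD_cons_zero,
    List.drop_length_add_append, List.drop_succ_cons, List.drop_zero, List.take_left']
  set A := (rotAt v j).drop (n + 1)
  set B := (rotAt v j).take n
  set a := v.getD j 0
  set b := v.getD ((j + 1 + n) % v.length) 0
  have hcoef : ω b x * ω y a = ω a y * ω x b := by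
    rw [hskew b, hskew y]
    ring
  rw [hcoef, ← smul_sub]
  refine Submodule.smul_mem _ _ ?_
  convert wordProd_append_sub_mem_commSpan (X ++ A) (W ++ B) using 2 <;> simp

lemma nestedBracketPart_sub_swap_mem (hskew : ∀ x y : E, ω x y = - ω y x) (u v w : List E) :
    nestedBracketPart ω u v w - nestedBracketPart ω w v u ∈ commSpan k E := by
  rw [nestedBracketPart_eq_sum ω w v u, ← sum_range_rotAt_index_swap,
    nestedBracketPart_eq_sum, ← sum_sub_distrib]
  refine sum_mem fun j hj => ?_
  rw [← sum_sub_distrib]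
  refine sum_mem fun n hn => ?_
  rw [sum_comm (s := range w.length), ← sum_sub_distrib]
  refine sum_mem fun i _ => ?_
  rw [← sum_sub_distrib]
  exact sum_mem fun l _ =>
    nestedBracketPart_term_sub_mem ω hskew _ _ _ _ v (mem_range.mp hj) (mem_range.mp hn)

lemma jacobiator_wordProd_mem (hskew : ∀ x y : E, ω x y = - ω y x)
    (Br : TensorAlgebra k E →ₗ[k] TensorAlgebra k E →ₗ[k] TensorAlgebra k E)
    (hBr : ∀ u v : List E, Br (wordProd k u) (wordProd k v) = wordBracket ω u v)
    (u v w : List E) :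
    jacobiator Br (wordProd k u) (wordProd k v) (wordProd k w) ∈ commSpan k E := by
  have h := add_mem (add_mem (nestedBracketPart_sub_swap_mem ω hskew u v w)
    (nestedBracketPart_sub_swap_mem ω hskew v w u)) (nestedBracketPart_sub_swap_mem ω hskew w u v)
  simp only [jacobiator, bracket_bracket_wordProd ω hskew Br hBr]
  convert h using 1
  abel

end WordBracket

end TensorAlgebra

theorem ginzburg_thm_2_2_free_case_general
    (k : Type*) [Field k] [CharZero k]
    (E : Type*) [AddCommGroup E] [Module k E]
    (ω : E →ₗ[k] E →ₗ[k] k)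
    (hskew : ∀ x y : E, ω x y = - ω y x)
    -- `Br` is the k-bilinear pairing `{·,·}_ω : TE × TE → TE`, determined by its values on
    -- homogeneous tensors (and vanishing when either argument lies in E^{⊗0} = k, which is
    -- the case `u = []` resp. `v = []` of the empty sum below):
    (Br : TensorAlgebra k E →ₗ[k] TensorAlgebra k E →ₗ[k] TensorAlgebra k E)
    (hBr : ∀ u v : List E, Br (wordProd k u) (wordProd k v) = wordBracket ω u v) :
    -- `{·,·}_ω` maps [TE,TE] × TE and TE × [TE,TE] into [TE,TE]:
    (∀ f ∈ commSpan k E, ∀ g : TensorAlgebra k E,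
        Br f g ∈ commSpan k E ∧ Br g f ∈ commSpan k E) ∧
    -- the induced bracket on TE/[TE,TE] is alternating:
    (∀ f : TensorAlgebra k E, Br f f ∈ commSpan k E) ∧
    -- the induced bracket on TE/[TE,TE] satisfies the Jacobi identity:
    (∀ f g h : TensorAlgebra k E,
        Br f (Br g h) + Br g (Br h f) + Br h (Br f g) ∈ commSpan k E) := by
  have hker : commSpan k E ≤ LinearMap.ker Br := commSpan_le_ker Br fun u v =>
    wordProd_ext fun w => by rw [hBr, hBr, wordBracket_append_comm]
  have hzero : ∀ f ∈ commSpan k E, ∀ g, Br f g = 0 := fun f hf g => by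
    rw [LinearMap.mem_ker.mp (hker hf), LinearMap.zero_apply]
  have hswap : ∀ f g, Br f g + Br g f ∈ commSpan k E :=
    add_swap_mem_of_forall_wordProd Br _ fun u v => by
      rw [hBr, hBr]
      exact wordBracket_add_swap_mem ω hskew u v
  refine ⟨fun f hf g => ⟨?_, ?_⟩, fun f => ?_,
    jacobiator_mem_of_forall_wordProd Br _ (jacobiator_wordProd_mem ω hskew Br hBr)⟩
  · rw [hzero f hf g]
    exact zero_mem _
  · simpa [hzero f hf g] using hswap f g
  · rw [← Submodule.smul_mem_iff _ (two_ne_zero : (2 : k) ≠ 0), two_smul]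
    exact hswap f f

theorem ginzburg_thm_2_2_free_case
    (k : Type*) [Field k] [CharZero k]
    (E : Type*) [AddCommGroup E] [Module k E] [FiniteDimensional k E]
    (ω : E →ₗ[k] E →ₗ[k] k)
    (hskew : ∀ x y : E, ω x y = - ω y x)
    (hnondeg : ∀ x : E, (∀ y : E, ω x y = 0) → x = 0)
    -- `Br` is the k-bilinear pairing `{·,·}_ω : TE × TE → TE`, determined by its values on
    -- homogeneous tensors (and vanishing when either argument lies in E^{⊗0} = k, which is
    -- the case `u = []` resp. `v = []` of the empty sum below):
    (Br : TensorAlgebra k E →ₗ[k] TensorAlgebra k E →ₗ[k] TensorAlgebra k E)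
    (hBr : ∀ u v : List E, Br (wordProd k u) (wordProd k v) = wordBracket ω u v) :
    -- `{·,·}_ω` maps [TE,TE] × TE and TE × [TE,TE] into [TE,TE]:
    (∀ f ∈ commSpan k E, ∀ g : TensorAlgebra k E,
        Br f g ∈ commSpan k E ∧ Br g f ∈ commSpan k E) ∧
    -- the induced bracket on TE/[TE,TE] is alternating:
    (∀ f : TensorAlgebra k E, Br f f ∈ commSpan k E) ∧
    -- the induced bracket on TE/[TE,TE] satisfies the Jacobi identity:
    (∀ f g h : TensorAlgebra k E,
        Br f (Br g h) + Br g (Br h f) + Br h (Br f g) ∈ commSpan k E) :=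
  ginzburg_thm_2_2_free_case_general k E ω hskew Br hBr
end
end

section
/- Let ω be a skew-symmetric k-bilinear form on a finite-dimensional k-vector space E. For all f, g ∈ TE one has {f, g}_ω + {g, f}_ω ∈ [TE,TE]; that is, the bracket induced by {·,·}_ω on TE/[TE,TE] is skew-symmetric. (Skew-symmetry step in Proposition 1.2 / Theorem 2.2 of the paper.) -/
/- STATEMENT 3 (skew-symmetry step in Proposition 1.2 / Theorem 2.2): For a
skew-symmetric bilinear form ω on a finite-dimensional k-vector space E and all
f, g ∈ TE one has {f, g}_ω + {g, f}_ω ∈ [TE,TE]; that is, the bracket induced by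
{·,·}_ω on TE/[TE,TE] is skew-symmetric. -/

noncomputable section

open scoped BigOperators

lemma wordProd_append_s3 (k : Type*) [Field k] {E : Type*} [AddCommGroup E] [Module k E]
    (u v : List E) : wordProd k (u ++ v) = wordProd k u * wordProd k v := by
  simp [wordProd]

lemma wordSpan_top (k : Type*) [Field k] {E : Type*} [AddCommGroup E] [Module k E]
    (x : TensorAlgebra k E) :
    x ∈ Submodule.span k (Set.range (wordProd k (E := E))) := by
  induction x using TensorAlgebra.induction with
  | algebraMap r =>
      have h : (algebraMap k (TensorAlgebra k E)) r = r • wordProd k ([] : List E) := by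
        simp [wordProd, Algebra.algebraMap_eq_smul_one]
      rw [h]
      exact Submodule.smul_mem _ _ (Submodule.subset_span ⟨[], rfl⟩)
  | ι x => exact Submodule.subset_span ⟨[x], by simp [wordProd]⟩
  | mul a b ha hb =>
      have h := Submodule.mul_mem_mul ha hb
      rw [Submodule.span_mul_span] at h
      refine Submodule.span_le.2 ?_ h
      rintro z ⟨p, ⟨up, rfl⟩, q, ⟨uq, rfl⟩, rfl⟩
      exact Submodule.subset_span ⟨up ++ uq, (wordProd_append_s3 k up uq).symm ▸ rfl⟩
  | add a b ha hb => exact Submodule.add_mem _ ha hb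

theorem ginzburg_bracket_skew_symmetric
    (k : Type*) [Field k] [CharZero k]
    (E : Type*) [AddCommGroup E] [Module k E] [FiniteDimensional k E]
    (ω : E →ₗ[k] E →ₗ[k] k)
    (hskew : ∀ x y : E, ω x y = - ω y x)
    -- `Br` is the k-bilinear pairing `{·,·}_ω : TE × TE → TE`, determined by its values on
    -- homogeneous tensors (and vanishing when either argument lies in E^{⊗0} = k):
    (Br : TensorAlgebra k E →ₗ[k] TensorAlgebra k E →ₗ[k] TensorAlgebra k E)
    (hBr : ∀ u v : List E, Br (wordProd k u) (wordProd k v) = wordBracket ω u v) :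
    -- {f, g}_ω + {g, f}_ω ∈ [TE,TE], i.e. the induced bracket on TE/[TE,TE] is
    -- skew-symmetric:
    ∀ f g : TensorAlgebra k E, Br f g + Br g f ∈ commSpan k E := by
  have key : ∀ u v : List E, wordBracket ω u v + wordBracket ω v u ∈ commSpan k E := by
    intro u v
    have h2 : wordBracket ω v u = - ∑ i : Fin u.length, ∑ j : Fin v.length,
        ω (u.get i) (v.get j) • wordProd k (rotAt v j ++ rotAt u i) := by
      rw [wordBracket, Finset.sum_comm, ← Finset.sum_neg_distrib]
      refine Finset.sum_congr rfl fun i _ => ?_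
      rw [← Finset.sum_neg_distrib]
      refine Finset.sum_congr rfl fun j _ => ?_
      rw [hskew, neg_smul]
    rw [h2, ← sub_eq_add_neg, wordBracket, ← Finset.sum_sub_distrib]
    refine Submodule.sum_mem _ fun i _ => ?_
    rw [← Finset.sum_sub_distrib]
    refine Submodule.sum_mem _ fun j _ => ?_
    rw [← smul_sub]
    refine Submodule.smul_mem _ _ (Submodule.subset_span ?_)
    exact ⟨wordProd k (rotAt u i), wordProd k (rotAt v j), by
      rw [wordProd_append_s3, wordProd_append_s3]⟩
  intro f g
  refine Submodule.span_induction
    (p := fun x _ => ∀ g, Br x g + Br g x ∈ commSpan k E) ?_ ?_ ?_ ?_ (wordSpan_top k f) g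
  · rintro x ⟨u, rfl⟩ g
    refine Submodule.span_induction
      (p := fun y _ => Br (wordProd k u) y + Br y (wordProd k u) ∈ commSpan k E)
      ?_ ?_ ?_ ?_ (wordSpan_top k g)
    · rintro y ⟨v, rfl⟩
      rw [hBr, hBr]
      exact key u v
    · simp
    · intro a b _ _ ha hb
      have h := Submodule.add_mem _ ha hb
      simpa [map_add, add_add_add_comm] using h
    · intro c y _ hy
      simp only [map_smul, LinearMap.smul_apply, ← smul_add]
      exact Submodule.smul_mem _ _ hy
  · intro g
    simp
  · intro a b _ _ ha hb g
    have h := Submodule.add_mem _ (ha g) (hb g)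
    simpa [map_add, add_add_add_comm] using h
  · intro c x _ hx g
    simp only [map_smul, LinearMap.smul_apply, ← smul_add]
    exact Submodule.smul_mem _ _ (hx g)
end
end
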